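/- arXiv:2404.08577 — 2 statements merged into one kernel-verified Lean document; each statement's English description precedes it below -/
import Mathlib

section
/- Let δ ∈ (0,1/2), let G=(V,E) be a connected finite simple graph on k ≥ 2 vertices with a fixed total order on E, let T ⊆ E be a spanning tree with broken edge set E_T, and set f(x) := ∏_{uv∈T} 1[x_u+x_v>1] · ∏_{st∈E_T} 1[x_s+x_t≤1] and J := [1/2−δ, 1/2+δ]. For S ⊆ V let P_S := {x ∈ J^V : x_u ≤ 1/2 for all u ∈ S and x_u ≥ 1/2 for all u ∉ S}. Call S nice if S is an independent set in the graph (V,T) and V∖S is an independent set in the graph (V,E_T). Then ∫_{[0,1/2+δ]^V} f dμ = Σ over nice subsets S ⊆ V of ∫_{P_S} f dμ. -/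
/-!
Every vertex lies on a tree edge, and on `[0, 1/2 + δ]^V` the factor `1[x_u + x_v > 1]` of such
an edge forces `x_u > 1/2 - δ`; so the integrand vanishes outside `J^V`. The pieces `P_S` cover
`J^V` and overlap only where some coordinate equals `1/2`, a null set. Off that null set a point
of `P_S` has `x_u < 1/2` exactly for `u ∈ S`, so a tree edge inside `S` or a broken edge outside
`S` makes the integrand vanish: only nice `S` contribute.
-/

open MeasureTheory

attribute [local instance] Classical.propDecidable

namespace VolumePaper

variable {V : Type} [Fintype V]

/-- The set of endpoints of a finite set of (potential) edges. -/
noncomputable def verts (T : Finset (Sym2 V)) : Finset V :=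
  Finset.univ.filter (fun v => ∃ e ∈ T, v ∈ e)

/-- `T` forms a tree (necessarily with at least one edge): the graph on the set of
endpoints of `T` whose edges are the members of `T` is a tree. -/
def IsTreeSet (T : Finset (Sym2 V)) : Prop :=
  (SimpleGraph.induce (↑(verts T) : Set V)
    (SimpleGraph.fromEdgeSet (↑T : Set (Sym2 V)))).IsTree

/-- The broken edges of `T` relative to the induced subgraph `G[S]` and a fixed
total edge order (given by an injective function `ord` into `ℕ`): edges `e` of `G[S]`
not in `T` such that `e` is the largest edge of a (the) cycle of `T ∪ {e}`. -/
noncomputable def brokenEdgesOn (G : SimpleGraph V) (ord : Sym2 V → ℕ) (S : Finset V)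
    (T : Finset (Sym2 V)) : Finset (Sym2 V) :=
  Finset.univ.filter (fun e =>
    e ∈ G.edgeSet ∧ (∀ v ∈ e, v ∈ S) ∧ e ∉ T ∧
    ∃ (u : V) (c : (SimpleGraph.fromEdgeSet (insert e (↑T : Set (Sym2 V)))).Walk u u),
      c.IsCycle ∧ e ∈ c.edges ∧ ∀ e' ∈ c.edges, ord e' ≤ ord e)

/-- The broken edges of a tree `T`, relative to the graph induced by `G` on the
endpoints of `T`. -/
noncomputable def brokenEdges (G : SimpleGraph V) (ord : Sym2 V → ℕ)
    (T : Finset (Sym2 V)) : Finset (Sym2 V) :=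
  brokenEdgesOn G ord (verts T) T

/-- Indicator (as a real number) of the event `x_u + x_v > 1` on an unordered pair. -/
noncomputable def indGt (x : V → ℝ) : Sym2 V → ℝ :=
  Sym2.lift ⟨fun u v => if 1 < x u + x v then 1 else 0, by intro a b; dsimp only; rw [add_comm]⟩

/-- Indicator (as a real number) of the event `x_u + x_v ≤ 1` on an unordered pair. -/
noncomputable def indLe (x : V → ℝ) : Sym2 V → ℝ :=
  Sym2.lift ⟨fun u v => if x u + x v ≤ 1 then 1 else 0, by intro a b; dsimp only; rw [add_comm]⟩

/-- Extension of a function on a finite subset of coordinates by `0`. -/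
noncomputable def extFun (S : Finset V) (x : {v // v ∈ S} → ℝ) : V → ℝ :=
  fun v => if h : v ∈ S then x ⟨v, h⟩ else 0

/-- The integral `∫_{[0,1/2+δ]^S} ∏_{uv ∈ T} 1[x_u+x_v>1] ∏_{st ∈ E_T} 1[x_s+x_t ≤ 1] dμ`,
where `E_T` is the set of broken edges of `T` relative to `G[S]`. -/
noncomputable def treeIntegral (G : SimpleGraph V) (ord : Sym2 V → ℕ) (δ : ℝ)
    (S : Finset V) (T : Finset (Sym2 V)) : ℝ :=
  ∫ x : {v // v ∈ S} → ℝ in Set.univ.pi (fun _ => Set.Icc (0:ℝ) (1/2 + δ)),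
    (∏ e ∈ T, indGt (extFun S x) e) * ∏ e ∈ brokenEdgesOn G ord S T, indLe (extFun S x) e

/-- The weight `w_T` of a tree `T` of edges of `G`. -/
noncomputable def treeWeight (G : SimpleGraph V) (ord : Sym2 V → ℕ) (δ : ℝ)
    (T : Finset (Sym2 V)) : ℝ :=
  (1/2 + δ) ^ (-((verts T).card : ℤ)) * (-1 : ℝ) ^ T.card *
    treeIntegral G ord δ (verts T) T

/-- The connected components (each having at least one edge) of a set `F` of edges. -/
noncomputable def comps (F : Finset (Sym2 V)) : Finset (Finset (Sym2 V)) :=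
  F.image (fun e => F.filter (fun e' => ∃ u ∈ e, ∃ v ∈ e',
    (SimpleGraph.fromEdgeSet (↑F : Set (Sym2 V))).Reachable u v))

/-- `F` is a forest of edges of `G` all of whose endpoints lie in `S`. -/
def IsForestOn (G : SimpleGraph V) (S : Finset V) (F : Finset (Sym2 V)) : Prop :=
  (↑F : Set (Sym2 V)) ⊆ G.edgeSet ∧ (∀ e ∈ F, ∀ v ∈ e, v ∈ S) ∧
    (SimpleGraph.fromEdgeSet (↑F : Set (Sym2 V))).IsAcyclic

/-- The polynomial `p_{G[S],δ}(x) = ∑_{F forest of G[S]} (∏_{T comp. of F} w_T) x^{|F|}`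
(with weights computed in `G`). -/
noncomputable def pPolyOn (G : SimpleGraph V) (ord : Sym2 V → ℕ) (δ : ℝ) (S : Finset V) :
    Polynomial ℂ :=
  ∑ F ∈ Finset.univ.filter (fun F => IsForestOn G S F),
    Polynomial.monomial F.card (((∏ T ∈ comps F, treeWeight G ord δ T : ℝ)) : ℂ)

/-- The polynomial `p_{G,δ}`. -/
noncomputable def pPoly (G : SimpleGraph V) (ord : Sym2 V → ℕ) (δ : ℝ) : Polynomial ℂ :=
  pPolyOn G ord δ Finset.univ

/-- `T` is (the edge set of) a spanning tree of the induced subgraph `G[S]`. -/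
def IsSpanningTreeOn (G : SimpleGraph V) (S : Finset V) (T : Finset (Sym2 V)) : Prop :=
  (↑T : Set (Sym2 V)) ⊆ G.edgeSet ∧ (∀ e ∈ T, ∀ v ∈ e, v ∈ S) ∧
    (SimpleGraph.induce (↑S : Set V)
      (SimpleGraph.fromEdgeSet (↑T : Set (Sym2 V)))).IsTree

/-- The weight `w(G[S])` of the subgraph of `G` induced by `S`. -/
noncomputable def indWeight (G : SimpleGraph V) (ord : Sym2 V → ℕ) (δ : ℝ)
    (S : Finset V) : ℝ :=
  ∑ T ∈ Finset.univ.filter (fun T => IsSpanningTreeOn G S T),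
    (1/2 + δ) ^ (-(S.card : ℤ)) * (-1 : ℝ) ^ T.card * treeIntegral G ord δ S T

/-- `G` has maximum degree at most `Δ`. -/
def maxDegreeLE (G : SimpleGraph V) (Δ : ℝ) : Prop :=
  ∀ v : V, ((Finset.univ.filter (fun u => G.Adj v u)).card : ℝ) ≤ Δ

/-- The truncated relaxed independent set polytope `P_{G,δ}`. -/
def polytope (G : SimpleGraph V) (δ : ℝ) : Set (V → ℝ) :=
  {x | (∀ v, x v ∈ Set.Icc (0:ℝ) (1/2 + δ)) ∧ ∀ ⦃u v⦄, G.Adj u v → x u + x v ≤ 1}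

section Indicators

variable {α : Type}

lemma indGt_mk (x : α → ℝ) (u v : α) :
    indGt x s(u, v) = if 1 < x u + x v then 1 else 0 := rfl

lemma indLe_mk (x : α → ℝ) (u v : α) :
    indLe x s(u, v) = if x u + x v ≤ 1 then 1 else 0 := rfl

lemma measurable_indGt (e : Sym2 α) : Measurable fun x : α → ℝ => indGt x e := by
  induction e using Sym2.ind with
  | _ u v =>
    exact Measurable.ite (measurableSet_lt measurable_const (by fun_prop))
      measurable_const measurable_const

lemma measurable_indLe (e : Sym2 α) : Measurable fun x : α → ℝ => indLe x e := by
  induction e using Sym2.ind with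
  | _ u v =>
    exact Measurable.ite (measurableSet_le (by fun_prop) measurable_const)
      measurable_const measurable_const

lemma indGt_mem_Icc (x : α → ℝ) (e : Sym2 α) : indGt x e ∈ Set.Icc (0 : ℝ) 1 := by
  induction e using Sym2.ind with
  | _ u v => rw [indGt_mk]; split_ifs <;> norm_num

lemma indLe_mem_Icc (x : α → ℝ) (e : Sym2 α) : indLe x e ∈ Set.Icc (0 : ℝ) 1 := by
  induction e using Sym2.ind with
  | _ u v => rw [indLe_mk]; split_ifs <;> norm_num

/-- The integrand `f`, with `B` in the role of `E_T`. -/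
noncomputable def edgeIndicator (T B : Finset (Sym2 α)) (x : α → ℝ) : ℝ :=
  (∏ e ∈ T, indGt x e) * ∏ e ∈ B, indLe x e

lemma measurable_edgeIndicator (T B : Finset (Sym2 α)) : Measurable (edgeIndicator T B) :=
  (Finset.measurable_prod _ fun e _ => measurable_indGt e).mul
    (Finset.measurable_prod _ fun e _ => measurable_indLe e)

lemma norm_edgeIndicator_le_one (T B : Finset (Sym2 α)) (x : α → ℝ) :
    ‖edgeIndicator T B x‖ ≤ 1 := by
  rw [edgeIndicator, norm_mul, norm_prod, norm_prod]
  refine mul_le_one₀ (Finset.prod_le_one (fun _ _ => norm_nonneg _) fun e _ => ?_)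
    (Finset.prod_nonneg fun _ _ => norm_nonneg _)
    (Finset.prod_le_one (fun _ _ => norm_nonneg _) fun e _ => ?_)
  · rw [Real.norm_of_nonneg (indGt_mem_Icc x e).1]; exact (indGt_mem_Icc x e).2
  · rw [Real.norm_of_nonneg (indLe_mem_Icc x e).1]; exact (indLe_mem_Icc x e).2

lemma edgeIndicator_eq_zero_of_le_one {T : Finset (Sym2 α)} (B : Finset (Sym2 α))
    {x : α → ℝ} {u v : α} (huv : s(u, v) ∈ T) (h : x u + x v ≤ 1) :
    edgeIndicator T B x = 0 :=
  mul_eq_zero_of_left (Finset.prod_eq_zero huv (if_neg h.not_gt)) _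

lemma edgeIndicator_eq_zero_of_one_lt (T : Finset (Sym2 α)) {B : Finset (Sym2 α)}
    {x : α → ℝ} {u v : α} (huv : s(u, v) ∈ B) (h : 1 < x u + x v) :
    edgeIndicator T B x = 0 :=
  mul_eq_zero_of_right _ (Finset.prod_eq_zero huv (if_neg h.not_ge))

def IsNice (T B : Finset (Sym2 α)) (S : Finset α) : Prop :=
  (∀ e ∈ T, ∃ u ∈ e, u ∉ S) ∧ ∀ e ∈ B, ∃ u ∈ e, u ∈ S

def piece (δ : ℝ) (S : Finset α) : Set (α → ℝ) :=
  {y | (∀ v, y v ∈ Set.Icc (1/2 - δ) (1/2 + δ)) ∧ (∀ u ∈ S, y u ≤ 1/2) ∧ (∀ u ∉ S, 1/2 ≤ y u)}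

lemma edgeIndicator_eq_zero_of_not_isNice {T B : Finset (Sym2 α)} {S : Finset α} {δ : ℝ}
    {x : α → ℝ} (hS : ¬ IsNice T B S) (hx : x ∈ piece δ S) (hx_half : ∀ v, x v ≠ 1/2) :
    edgeIndicator T B x = 0 := by
  obtain ⟨-, hle, hge⟩ := hx
  rw [IsNice, not_and_or] at hS
  push Not at hS
  rcases hS with ⟨e, he, hin⟩ | ⟨e, he, hout⟩
  · induction e using Sym2.ind with
    | _ u v =>
      have := hle u (hin u (Sym2.mem_mk_left u v))
      have := hle v (hin v (Sym2.mem_mk_right u v))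
      exact edgeIndicator_eq_zero_of_le_one B he (by linarith)
  · induction e using Sym2.ind with
    | _ u v =>
      have := (hge u (hout u (Sym2.mem_mk_left u v))).lt_of_ne (hx_half u).symm
      have := (hge v (hout v (Sym2.mem_mk_right u v))).lt_of_ne (hx_half v).symm
      exact edgeIndicator_eq_zero_of_one_lt T he (by linarith)

lemma edgeIndicator_eq_zero_of_lt {T : Finset (Sym2 α)} (B : Finset (Sym2 α))
    (hT : ∀ v, ∃ e ∈ T, v ∈ e) {δ : ℝ} {x : α → ℝ} (hx : ∀ v, x v ≤ 1/2 + δ) {v : α}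
    (hv : x v < 1/2 - δ) : edgeIndicator T B x = 0 := by
  obtain ⟨e, he, hve⟩ := hT v
  induction e using Sym2.ind with
  | _ a b =>
    rcases Sym2.mem_iff.1 hve with rfl | rfl
    · exact edgeIndicator_eq_zero_of_le_one B he (by linarith [hx b])
    · exact edgeIndicator_eq_zero_of_le_one B he (by linarith [hx a])

end Indicators

lemma iUnion_piece (δ : ℝ) :
    ⋃ S : Finset V, piece δ S = Set.univ.pi fun _ => Set.Icc (1/2 - δ) (1/2 + δ) := by
  ext x
  simp only [Set.mem_iUnion, Set.mem_univ_pi]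
  refine ⟨fun ⟨S, hS⟩ => hS.1, fun hx => ⟨Finset.univ.filter (fun v => x v ≤ 1/2), hx, ?_, ?_⟩⟩
  · intro u hu; exact (Finset.mem_filter.1 hu).2
  · intro u hu
    simp only [Finset.mem_filter, Finset.mem_univ, true_and, not_le] at hu
    exact hu.le

lemma measurableSet_piece (δ : ℝ) (S : Finset V) : MeasurableSet (piece δ S) := by
  simp only [piece, Set.ofPred_and, Set.ofPred_forall, Set.mem_Icc]
  measurability

lemma volume_eval_eq_zero (v : V) (a : ℝ) : volume {x : V → ℝ | x v = a} = 0 := by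
  have := Measure.ae_eval_ne (fun _ : V => (volume : Measure ℝ)) v a
  rw [← volume_pi, ae_iff] at this
  simpa using this

lemma aedisjoint_piece (δ : ℝ) {S S' : Finset V} (h : S ≠ S') :
    AEDisjoint volume (piece δ S) (piece δ S') := by
  obtain ⟨v, hv⟩ := not_forall.1 (mt Finset.ext h)
  refine measure_mono_null (fun x ⟨hx, hx'⟩ => ?_) (volume_eval_eq_zero v (1/2))
  by_cases hvS : v ∈ S
  · have hvS' : v ∉ S' := fun h' => hv (iff_of_true hvS h')
    exact le_antisymm (hx.2.1 v hvS) (hx'.2.2 v hvS')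
  · have hvS' : v ∈ S' := by tauto
    exact le_antisymm (hx'.2.1 v hvS') (hx.2.2 v hvS)

theorem setIntegral_edgeIndicator_eq_sum_isNice {δ : ℝ} (hδ : δ ≤ 1/2)
    {T : Finset (Sym2 V)} (B : Finset (Sym2 V)) (hT : ∀ v, ∃ e ∈ T, v ∈ e) :
    ∫ x in Set.univ.pi (fun _ => Set.Icc (0:ℝ) (1/2 + δ)), edgeIndicator T B x
      = ∑ S ∈ Finset.univ.filter (IsNice T B), ∫ x in piece δ S, edgeIndicator T B x := by
  set J : Set (V → ℝ) := Set.univ.pi fun _ => Set.Icc (1/2 - δ) (1/2 + δ)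
  have hJ_sub : J ⊆ Set.univ.pi (fun _ => Set.Icc (0:ℝ) (1/2 + δ)) :=
    Set.pi_mono fun _ _ => Set.Icc_subset_Icc (by linarith) le_rfl
  have hJ : J = ⋃ S : Finset V, piece δ S := (iUnion_piece δ).symm
  have hJ_int : IntegrableOn (edgeIndicator T B) J :=
    Measure.integrableOn_of_bounded (isCompact_univ_pi fun _ => isCompact_Icc).measure_lt_top.ne
      (measurable_edgeIndicator T B).aestronglyMeasurable
      (ae_of_all _ (norm_edgeIndicator_le_one T B))
  have h_ne_half : ∀ᵐ x : V → ℝ, ∀ v, x v ≠ 1/2 :=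
    ae_all_iff.2 fun v => measure_eq_zero_iff_ae_notMem.1 (volume_eval_eq_zero v (1/2))
  calc ∫ x in Set.univ.pi (fun _ => Set.Icc (0:ℝ) (1/2 + δ)), edgeIndicator T B x
      = ∫ x in J, edgeIndicator T B x := by
        refine setIntegral_eq_of_subset_of_forall_sdiff_eq_zero
          (MeasurableSet.univ_pi fun _ => measurableSet_Icc) hJ_sub fun x ⟨hx, hxJ⟩ => ?_
        simp only [J, Set.mem_univ_pi, Set.mem_Icc, not_forall, not_and_or, not_le] at hx hxJ
        obtain ⟨v, hv | hv⟩ := hxJ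
        · exact edgeIndicator_eq_zero_of_lt B hT (fun w => (hx w).2) hv
        · exact absurd (hx v).2 hv.not_ge
    _ = ∑ S, ∫ x in piece δ S, edgeIndicator T B x := by
        rw [hJ] at hJ_int ⊢
        rw [integral_iUnion_ae (fun S => (measurableSet_piece δ S).nullMeasurableSet)
          (fun S S' h => aedisjoint_piece δ h) hJ_int, tsum_fintype]
    _ = ∑ S ∈ Finset.univ.filter (IsNice T B), ∫ x in piece δ S, edgeIndicator T B x := by
        refine (Finset.sum_subset (Finset.filter_subset _ _) fun S _ hS => ?_).symm
        refine setIntegral_eq_zero_of_ae_eq_zero ?_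
        filter_upwards [h_ne_half] with x hx hxS
        exact edgeIndicator_eq_zero_of_not_isNice (by simpa using hS) hxS hx

theorem statement14_general (δ : ℝ) (hδ : δ ∈ Set.Ioo (0:ℝ) (1/2)) (V : Type) [Fintype V]
    (hcard : 2 ≤ Fintype.card V) (G : SimpleGraph V)
    (ord : Sym2 V → ℕ) (T : Finset (Sym2 V))
    (hT : (SimpleGraph.fromEdgeSet (↑T : Set (Sym2 V))).IsTree) :
    (∫ x : V → ℝ in Set.univ.pi (fun _ => Set.Icc (0:ℝ) (1/2 + δ)),
        (∏ e ∈ T, indGt x e) * ∏ e ∈ brokenEdgesOn G ord Finset.univ T, indLe x e)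
    = ∑ S ∈ Finset.univ.filter (fun S : Finset V =>
          (∀ e ∈ T, ∃ u ∈ e, u ∉ S) ∧
          (∀ e ∈ brokenEdgesOn G ord Finset.univ T, ∃ u ∈ e, u ∈ S)),
        ∫ x : V → ℝ in {y : V → ℝ | (∀ v, y v ∈ Set.Icc (1/2 - δ) (1/2 + δ)) ∧
            (∀ u ∈ S, y u ≤ 1/2) ∧ (∀ u ∉ S, 1/2 ≤ y u)},
          (∏ e ∈ T, indGt x e) * ∏ e ∈ brokenEdgesOn G ord Finset.univ T, indLe x e := by
  have : Nontrivial V := Fintype.one_lt_card_iff_nontrivial.1 hcard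
  have hT_spanning : ∀ v, ∃ e ∈ T, v ∈ e := fun v => by
    obtain ⟨u, hvu⟩ := hT.connected.preconnected.exists_adj_of_nontrivial v
    exact ⟨s(v, u), ((SimpleGraph.fromEdgeSet_adj _).1 hvu).1, Sym2.mem_mk_left v u⟩
  convert setIntegral_edgeIndicator_eq_sum_isNice hδ.2.le (brokenEdgesOn G ord Finset.univ T)
    hT_spanning using 3 <;> rfl

/-- With `f` as before, `J = [1/2−δ,1/2+δ]`, and for `S ⊆ V` the
piece `P_S = {x ∈ J^V : x_u ≤ 1/2 for u ∈ S, x_u ≥ 1/2 for u ∉ S}`, calling `S` nice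
when `S` is independent in `(V,T)` and `V∖S` is independent in `(V,E_T)`:
`∫_{[0,1/2+δ]^V} f dμ = ∑_{S nice} ∫_{P_S} f dμ`. -/
theorem statement14 (δ : ℝ) (hδ : δ ∈ Set.Ioo (0:ℝ) (1/2)) (V : Type) [Fintype V]
    (hcard : 2 ≤ Fintype.card V) (G : SimpleGraph V) (hconn : G.Connected)
    (ord : Sym2 V → ℕ) (hord : Function.Injective ord) (T : Finset (Sym2 V))
    (hTE : (↑T : Set (Sym2 V)) ⊆ G.edgeSet)
    (hT : (SimpleGraph.fromEdgeSet (↑T : Set (Sym2 V))).IsTree) :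
    (∫ x : V → ℝ in Set.univ.pi (fun _ => Set.Icc (0:ℝ) (1/2 + δ)),
        (∏ e ∈ T, indGt x e) * ∏ e ∈ brokenEdgesOn G ord Finset.univ T, indLe x e)
    = ∑ S ∈ Finset.univ.filter (fun S : Finset V =>
          (∀ e ∈ T, ∃ u ∈ e, u ∉ S) ∧
          (∀ e ∈ brokenEdgesOn G ord Finset.univ T, ∃ u ∈ e, u ∈ S)),
        ∫ x : V → ℝ in {y : V → ℝ | (∀ v, y v ∈ Set.Icc (1/2 - δ) (1/2 + δ)) ∧
            (∀ u ∈ S, y u ≤ 1/2) ∧ (∀ u ∉ S, 1/2 ≤ y u)},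
          (∏ e ∈ T, indGt x e) * ∏ e ∈ brokenEdgesOn G ord Finset.univ T, indLe x e :=
  statement14_general δ hδ V hcard G ord T hT

end VolumePaper
end

section
/- Let (X, μ) be a probability space, let f : X × X → [0,1] be measurable, and suppose c ∈ [0,1] satisfies ∫_X (1 − f(x,y)) dμ(y) ≤ c for every x ∈ X. Let G=(V,E) be a finite simple graph with a fixed total order on E and let T ⊆ E be a subset forming a tree with vertex set V(T) and broken edge set E_T (relative to the induced subgraph G[V(T)]). Then |∫_{X^{V(T)}} ∏_{uv∈T} (1 − f(x_u,x_v)) · ∏_{st∈E_T} f(x_s,x_t) dμ^{V(T)}| ≤ c^{|T|}, where |T| is the number of edges of T. -/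
open MeasureTheory

attribute [local instance] Classical.propDecidable

namespace VolumePaper

variable {V : Type} [Fintype V]

/-- Evaluation of a symmetric two-variable function on an unordered pair of vertices,
via a configuration `y` indexed by a finite vertex subset (junk value `0` off `S`). -/
noncomputable def pairApply {X : Type} (S : Finset V) (g : X → X → ℝ)
    (hg : ∀ a b, g a b = g b a) (y : {v // v ∈ S} → X) : Sym2 V → ℝ :=
  Sym2.lift ⟨fun u v =>
      if hu : u ∈ S then (if hv : v ∈ S then g (y ⟨u, hu⟩) (y ⟨v, hv⟩) else 0) else 0,
    by
      intro a b
      dsimp only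
      by_cases ha : a ∈ S <;> by_cases hb : b ∈ S <;> simp [ha, hb, hg]⟩


/-! Drop the broken-edge factors, which lie in `[0, 1]`. In what remains,
`∏_{uv ∈ T} (1 - f(x_u, x_v))`, integrate out the coordinate of a leaf `u` of `T` with
neighbour `v`: the only factor involving `x_u` integrates to at most `c`, and removing the leaf
leaves a forest with one edge fewer. Induction on the number of edges gives `c ^ |T|`. -/

end VolumePaper

namespace SimpleGraph

variable {W : Type} {G : SimpleGraph W}

theorem IsAcyclic.of_induce_of_support_subset {s : Set W} (hs : G.support ⊆ s)
    (h : (G.induce s).IsAcyclic) : G.IsAcyclic := by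
  intro u c hc
  have hsupp : ∀ x ∈ c.support, x ∈ s := fun x hx =>
    hs (mem_support_of_mem_walk_support c hc.not_nil hx)
  exact h (c.induce s hsupp) (Walk.IsCycle.of_map (f := (Embedding.induce s).toHom)
    (by rwa [Walk.map_induce]))

theorem IsAcyclic.exists_adj_forall_adj_eq [Finite W] (hG : G.IsAcyclic) {a b : W}
    (hab : G.Adj a b) : ∃ u v, G.Adj u v ∧ ∀ w, G.Adj u w → w = v := by
  have : Nonempty W := ⟨a⟩
  obtain ⟨u, v, p, hp, hmax⟩ := Walk.exists_isPath_forall_isPath_length_le_length G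
  have hnil : ¬p.Nil := fun hn => by
    have := hmax a b (Walk.cons hab .nil) (by simp [hab.ne])
    simp [Walk.length_eq_zero_iff.mpr hn] at this
  refine ⟨u, p.snd, p.adj_snd hnil, fun w hw => hG.eq_snd_of_adj_start hp hw ?_⟩
  by_contra hws
  have := hmax w v (p.cons hw.symm) (hp.cons hws)
  simp at this

theorem IsAcyclic.exists_leaf_edge [Finite W] {T : Finset (Sym2 W)}
    (hT : (fromEdgeSet (T : Set (Sym2 W))).IsAcyclic) (hdiag : ∀ e ∈ T, ¬e.IsDiag)
    (hne : T.Nonempty) : ∃ u v, u ≠ v ∧ s(u, v) ∈ T ∧ ∀ e ∈ T, u ∈ e → e = s(u, v) := by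
  obtain ⟨e, he⟩ := hne
  induction e using Sym2.ind with
  | _ a b =>
  have hab : (fromEdgeSet (T : Set (Sym2 W))).Adj a b :=
    (fromEdgeSet_adj _).mpr ⟨he, fun h => hdiag _ he (by simp [h])⟩
  obtain ⟨u, v, huv, hleaf⟩ := hT.exists_adj_forall_adj_eq hab
  rw [fromEdgeSet_adj] at huv
  refine ⟨u, v, huv.2, huv.1, fun e he hue => ?_⟩
  obtain ⟨w, rfl⟩ := Sym2.mem_iff_exists.mp hue
  have huw : (fromEdgeSet (T : Set (Sym2 W))).Adj u w :=
    (fromEdgeSet_adj _).mpr ⟨he, fun h => hdiag _ he (by simp [h])⟩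
  rw [hleaf w huw]

end SimpleGraph

namespace VolumePaper

open scoped ENNReal

section PairApply

variable {W X : Type} (S : Finset W) {g : X → X → ℝ} (hg : ∀ a b, g a b = g b a)

theorem pairApply_mk (y : S → X) (u v : W) :
    pairApply S g hg y s(u, v) =
      if hu : u ∈ S then (if hv : v ∈ S then g (y ⟨u, hu⟩) (y ⟨v, hv⟩) else 0) else 0 :=
  rfl

theorem pairApply_mem_Icc (hr : ∀ a b, g a b ∈ Set.Icc (0 : ℝ) 1) (y : S → X) (e : Sym2 W) :
    pairApply S g hg y e ∈ Set.Icc (0 : ℝ) 1 := by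
  induction e using Sym2.ind with
  | _ u v => rw [pairApply_mk]; split_ifs <;> simp [hr]

theorem prod_pairApply_mem_Icc (hr : ∀ a b, g a b ∈ Set.Icc (0 : ℝ) 1) (y : S → X)
    (T : Finset (Sym2 W)) : ∏ e ∈ T, pairApply S g hg y e ∈ Set.Icc (0 : ℝ) 1 :=
  ⟨Finset.prod_nonneg fun e _ => (pairApply_mem_Icc S hg hr y e).1,
    Finset.prod_le_one (fun e _ => (pairApply_mem_Icc S hg hr y e).1)
      fun e _ => (pairApply_mem_Icc S hg hr y e).2⟩

theorem pairApply_update_of_notMem (x : S → X) (i : S) (a : X) {e : Sym2 W}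
    (hi : (i : W) ∉ e) : pairApply S g hg (Function.update x i a) e = pairApply S g hg x e := by
  induction e using Sym2.ind with
  | _ u v =>
  have hu : ∀ h : u ∈ S, (⟨u, h⟩ : S) ≠ i := fun _ h => hi (by simp [← h])
  have hv : ∀ h : v ∈ S, (⟨v, h⟩ : S) ≠ i := fun _ h => hi (by simp [← h])
  simp only [pairApply_mk]
  split_ifs with h₁ h₂
  · rw [Function.update_of_ne (hu h₁), Function.update_of_ne (hv h₂)]
  all_goals rfl

variable [MeasurableSpace X]

theorem measurable_pairApply (hgm : Measurable (Function.uncurry g)) (e : Sym2 W) :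
    Measurable fun y : S → X => pairApply S g hg y e := by
  induction e using Sym2.ind with
  | _ u v =>
  simp only [pairApply_mk]
  by_cases hu : u ∈ S <;> by_cases hv : v ∈ S <;> simp only [hu, hv, ↓reduceDIte]
  · have hpair : Measurable fun y : S → X => (y ⟨u, hu⟩, y ⟨v, hv⟩) :=
      (measurable_pi_apply _).prodMk (measurable_pi_apply _)
    exact hgm.comp hpair
  all_goals exact measurable_const

end PairApply

section TreeBound

variable {W X : Type} [MeasurableSpace X] (μ : Measure X)
  (S : Finset W) {g : X → X → ℝ} (hg : ∀ a b, g a b = g b a)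

theorem lintegral_update_leaf_le (hgm : Measurable (Function.uncurry g)) {C : ℝ≥0∞}
    (hC : ∀ a, ∫⁻ x, ENNReal.ofReal (g a x) ∂μ ≤ C)
    {T : Finset (Sym2 W)} {v s : W} (hv : v ∈ S) (hs : s ∈ S) (hvs : v ≠ s)
    (he : s(v, s) ∈ T) (hleaf : ∀ e ∈ T, v ∈ e → e = s(v, s)) (x : S → X) :
    ∫⁻ a, ∏ e ∈ T, ENNReal.ofReal (pairApply S g hg (Function.update x ⟨v, hv⟩ a) e) ∂μ ≤
      C * ∏ e ∈ T.erase s(v, s), ENNReal.ofReal (pairApply S g hg x e) := by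
  have hsplit : ∀ a, ∏ e ∈ T, ENNReal.ofReal (pairApply S g hg (Function.update x ⟨v, hv⟩ a) e)
      = ENNReal.ofReal (g (x ⟨s, hs⟩) a) *
        ∏ e ∈ T.erase s(v, s), ENNReal.ofReal (pairApply S g hg x e) := by
    intro a
    rw [← Finset.mul_prod_erase T _ he]
    congr 1
    · have hsv : (⟨s, hs⟩ : S) ≠ ⟨v, hv⟩ := fun h => hvs (congrArg Subtype.val h).symm
      simp [pairApply_mk, hv, hs, Function.update_of_ne hsv, hg a]
    · refine Finset.prod_congr rfl fun e he' => ?_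
      obtain ⟨hne, heT⟩ := Finset.mem_erase.mp he'
      rw [pairApply_update_of_notMem S hg x _ a fun hve => hne (hleaf e heT hve)]
  have hmeas : Measurable fun a => ENNReal.ofReal (g (x ⟨s, hs⟩) a) :=
    ENNReal.measurable_ofReal.comp (hgm.comp measurable_prodMk_left)
  simp_rw [hsplit]
  rw [lintegral_mul_const _ hmeas]
  gcongr
  exact hC _

variable [IsProbabilityMeasure μ]

theorem lmarginal_prod_pairApply_le [Finite W] (hgm : Measurable (Function.uncurry g)) {C : ℝ≥0∞}
    (hC : ∀ a, ∫⁻ x, ENNReal.ofReal (g a x) ∂μ ≤ C) (T : Finset (Sym2 W))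
    (hT : (SimpleGraph.fromEdgeSet (T : Set (Sym2 W))).IsAcyclic) (hdiag : ∀ e ∈ T, ¬e.IsDiag)
    (S' : Finset S) (hS' : ∀ e ∈ T, ∀ v ∈ e, ∃ hv : v ∈ S, ⟨v, hv⟩ ∈ S') (y : S → X) :
    (∫⋯∫⁻_S', fun z => ∏ e ∈ T, ENNReal.ofReal (pairApply S g hg z e) ∂fun _ => μ) y ≤
      C ^ T.card := by
  induction T using Finset.strongInduction generalizing S' y with
  | H T ih =>
  rcases T.eq_empty_or_nonempty with rfl | hne
  · simp [lmarginal]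
  obtain ⟨v, s, hvs, he, hleaf⟩ := hT.exists_leaf_edge hdiag hne
  obtain ⟨hv, hvS'⟩ := hS' _ he v (Sym2.mem_mk_left v s)
  obtain ⟨hs, -⟩ := hS' _ he s (Sym2.mem_mk_right v s)
  have hmeas : ∀ T' : Finset (Sym2 W),
      Measurable fun z : S → X => ∏ e ∈ T', ENNReal.ofReal (pairApply S g hg z e) :=
    fun T' => Finset.measurable_prod _ fun e _ =>
      ENNReal.measurable_ofReal.comp (measurable_pairApply S hg hgm e)
  rw [← Finset.insert_erase hvS', lmarginal_insert' _ (hmeas T) (Finset.notMem_erase _ _)]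
  calc _ ≤ (∫⋯∫⁻_S'.erase ⟨v, hv⟩, fun z =>
          C * ∏ e ∈ T.erase s(v, s), ENNReal.ofReal (pairApply S g hg z e) ∂fun _ => μ) y :=
        lmarginal_mono (fun x => lintegral_update_leaf_le μ S hg hgm hC hv hs hvs he hleaf x) y
    _ = C * (∫⋯∫⁻_S'.erase ⟨v, hv⟩, fun z =>
          ∏ e ∈ T.erase s(v, s), ENNReal.ofReal (pairApply S g hg z e) ∂fun _ => μ) y :=
        lintegral_const_mul _ ((hmeas _).comp measurable_updateFinset)
    _ ≤ C * C ^ (T.erase s(v, s)).card := by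
        gcongr
        refine ih _ (Finset.erase_ssubset he) (hT.anti (SimpleGraph.fromEdgeSet_mono ?_))
          (fun e he' => hdiag e (Finset.mem_of_mem_erase he')) _ (fun e he' w hwe => ?_) y
        · exact_mod_cast Finset.erase_subset _ _
        · obtain ⟨hne, heT⟩ := Finset.mem_erase.mp he'
          obtain ⟨hw, hwS'⟩ := hS' e heT w hwe
          refine ⟨hw, Finset.mem_erase.mpr ⟨fun h => hne (hleaf e heT ?_), hwS'⟩⟩
          rwa [← show w = v from congrArg Subtype.val h]
    _ = C ^ T.card := by
        rw [← pow_succ', Finset.card_erase_add_one he]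

theorem lintegral_prod_pairApply_le [Finite W] (hgm : Measurable (Function.uncurry g))
    {C : ℝ≥0∞} (hC : ∀ a, ∫⁻ x, ENNReal.ofReal (g a x) ∂μ ≤ C) (T : Finset (Sym2 W))
    (hT : (SimpleGraph.fromEdgeSet (T : Set (Sym2 W))).IsAcyclic) (hdiag : ∀ e ∈ T, ¬e.IsDiag)
    (hTS : ∀ e ∈ T, ∀ v ∈ e, v ∈ S) :
    ∫⁻ z, ∏ e ∈ T, ENNReal.ofReal (pairApply S g hg z e) ∂Measure.pi (fun _ : S => μ) ≤
      C ^ T.card := by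
  have := nonempty_of_isProbabilityMeasure μ
  rw [lintegral_eq_lmarginal_univ fun _ => Classical.arbitrary X]
  exact lmarginal_prod_pairApply_le μ S hg hgm hC T hT hdiag _
    (fun e he v hv => ⟨hTS e he v hv, Finset.mem_univ _⟩) _

theorem integrable_prod_pairApply (hgm : Measurable (Function.uncurry g))
    (hr : ∀ a b, g a b ∈ Set.Icc (0 : ℝ) 1) (T : Finset (Sym2 W)) :
    Integrable (fun z => ∏ e ∈ T, pairApply S g hg z e) (Measure.pi fun _ : S => μ) := by
  refine .of_bound (Finset.measurable_prod _ fun e _ =>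
    measurable_pairApply S hg hgm e).aestronglyMeasurable 1 (ae_of_all _ fun z => ?_)
  obtain ⟨h0, h1⟩ := prod_pairApply_mem_Icc S hg hr z T
  exact (Real.norm_of_nonneg h0).trans_le h1

theorem integral_prod_pairApply_le [Finite W] (hgm : Measurable (Function.uncurry g))
    (hr : ∀ a b, g a b ∈ Set.Icc (0 : ℝ) 1) {c : ℝ} (hc : 0 ≤ c) (hint : ∀ a, ∫ x, g a x ∂μ ≤ c)
    (T : Finset (Sym2 W)) (hT : (SimpleGraph.fromEdgeSet (T : Set (Sym2 W))).IsAcyclic)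
    (hdiag : ∀ e ∈ T, ¬e.IsDiag) (hTS : ∀ e ∈ T, ∀ v ∈ e, v ∈ S) :
    ∫ z, ∏ e ∈ T, pairApply S g hg z e ∂Measure.pi (fun _ : S => μ) ≤ c ^ T.card := by
  have hC : ∀ a, ∫⁻ x, ENNReal.ofReal (g a x) ∂μ ≤ ENNReal.ofReal c := by
    intro a
    have hga : Integrable (g a) μ :=
      .of_bound (hgm.comp measurable_prodMk_left).aestronglyMeasurable 1
        (ae_of_all _ fun x => (Real.norm_of_nonneg (hr a x).1).trans_le (hr a x).2)
    rw [← ofReal_integral_eq_lintegral_ofReal hga (ae_of_all _ fun x => (hr a x).1)]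
    exact ENNReal.ofReal_le_ofReal (hint a)
  rw [integral_eq_lintegral_of_nonneg_ae
    (ae_of_all _ fun z => (prod_pairApply_mem_Icc S hg hr z T).1)
    (integrable_prod_pairApply μ S hg hgm hr T).aestronglyMeasurable]
  simp_rw [ENNReal.ofReal_prod_of_nonneg fun e _ => (pairApply_mem_Icc S hg hr _ e).1]
  calc _ ≤ (ENNReal.ofReal c ^ T.card).toReal :=
        ENNReal.toReal_mono (by simp) (lintegral_prod_pairApply_le μ S hg hgm hC T hT hdiag hTS)
    _ = c ^ T.card := by rw [ENNReal.toReal_pow, ENNReal.toReal_ofReal hc]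

end TreeBound

section Trees

variable {V : Type} [Fintype V] {T : Finset (Sym2 V)}

theorem mem_verts {v : V} : v ∈ verts T ↔ ∃ e ∈ T, v ∈ e := by
  simp [verts]

theorem IsTreeSet.isAcyclic (hT : IsTreeSet T) :
    (SimpleGraph.fromEdgeSet (T : Set (Sym2 V))).IsAcyclic := by
  refine (SimpleGraph.IsTree.isAcyclic hT).of_induce_of_support_subset fun v ⟨w, hvw⟩ => ?_
  exact mem_verts.mpr ⟨s(v, w), ((SimpleGraph.fromEdgeSet_adj _).mp hvw).1, Sym2.mem_mk_left v w⟩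

end Trees

/-- Let `(X,μ)` be a probability space, `f : X × X → [0,1]`
measurable (and symmetric, so that it makes sense on unordered pairs), and suppose
`∫ (1 − f(x,y)) dμ(y) ≤ c` for every `x`. Then for any tree `T ⊆ E(G)` with broken
edge set `E_T` (relative to `G[V(T)]`),
`|∫_{X^{V(T)}} ∏_{uv∈T}(1−f(x_u,x_v)) ∏_{st∈E_T} f(x_s,x_t) dμ^{V(T)}| ≤ c^{|T|}`. -/
theorem statement17 (X : Type) [MeasurableSpace X] (μ : Measure X)
    [IsProbabilityMeasure μ] (f : X → X → ℝ) (hmeas : Measurable (Function.uncurry f))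
    (hsym : ∀ a b, f a b = f b a) (hrange : ∀ a b, f a b ∈ Set.Icc (0:ℝ) 1)
    (c : ℝ) (hc : c ∈ Set.Icc (0:ℝ) 1) (hint : ∀ a : X, (∫ y, (1 - f a y) ∂μ) ≤ c)
    (V : Type) [Fintype V] (G : SimpleGraph V) (ord : Sym2 V → ℕ)
    (T : Finset (Sym2 V))
    (hTE : (↑T : Set (Sym2 V)) ⊆ G.edgeSet) (hT : IsTreeSet T) :
    |∫ y : {v // v ∈ verts T} → X,
        (∏ e ∈ T, pairApply (verts T) (fun a b => 1 - f a b)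
            (fun a b => by rw [hsym a b]) y e) *
          ∏ e ∈ brokenEdgesOn G ord (verts T) T, pairApply (verts T) f hsym y e
      ∂(Measure.pi (fun _ => μ))| ≤ c ^ T.card := by
  have hsym' : ∀ a b, 1 - f a b = 1 - f b a := fun a b => by rw [hsym a b]
  have hrange' : ∀ a b, 1 - f a b ∈ Set.Icc (0 : ℝ) 1 := fun a b =>
    ⟨sub_nonneg.mpr (hrange a b).2, sub_le_self 1 (hrange a b).1⟩
  set F := fun y => ∏ e ∈ T, pairApply (verts T) (fun a b => 1 - f a b) hsym' y e
  have hF := prod_pairApply_mem_Icc (verts T) hsym' hrange'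
  have hbroken := prod_pairApply_mem_Icc (verts T) hsym hrange
  calc _ = ∫ y, F y * ∏ e ∈ brokenEdgesOn G ord (verts T) T, pairApply (verts T) f hsym y e
        ∂Measure.pi (fun _ => μ) :=
      abs_of_nonneg (integral_nonneg fun y => mul_nonneg (hF y T).1 (hbroken y _).1)
    _ ≤ ∫ y, F y ∂Measure.pi (fun _ => μ) :=
      integral_mono_of_nonneg (ae_of_all _ fun y => mul_nonneg (hF y T).1 (hbroken y _).1)
        (integrable_prod_pairApply μ _ hsym' (measurable_const.sub hmeas) hrange' T)
        (ae_of_all _ fun y => mul_le_of_le_one_right (hF y T).1 (hbroken y _).2)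
    _ ≤ c ^ T.card :=
      integral_prod_pairApply_le μ _ hsym' (measurable_const.sub hmeas) hrange' hc.1 hint T
        hT.isAcyclic (fun e he => G.not_isDiag_of_mem_edgeSet (hTE he))
        (fun e he v hv => mem_verts.mpr ⟨e, he, hv⟩)

end VolumePaper
end
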